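/- arXiv:1410.2159 — 12 statements merged into one kernel-verified Lean document; each statement's English description precedes it below -/
import Mathlib

section
/- Let K be a field, n a positive integer, and let a_1,...,a_n, b_1,...,b_n be scalars from K such that a_1,...,a_n are mutually distinct and a_1,...,a_n, b_1,...,b_n are all mutually distinct from each other (i.e. a_i ≠ b_j for all i,j and a_i ≠ a_k for i ≠ k, b_i ≠ b_k for i ≠ k). Define A_i = (∏_{k=1}^n (a_i - b_k)) / (∏_{k ≠ i} (a_i - a_k)). Then for every j with 1 ≤ j ≤ n, ∑_{i=1}^n A_i/(a_i - b_j) = 1. -/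
/-!
Partial fractions: with `p = ∏ₖ (X - b k)` and `q = ∏ₖ (X - a k)`, the polynomial `p - q` has degree
`< n`, so Lagrange interpolation at the nodes `a i` (where it takes the values `p (a i)`) gives
`p / q = 1 + ∑ᵢ A i / (X - a i)`. Evaluating at the root `b j` of `p` yields the claim.
-/

open Polynomial Finset

namespace Lagrange

variable {F ι : Type*} [Field F] [DecidableEq ι] {s : Finset ι} {v : ι → F} {x : F}

theorem eval_eq_eval_nodal_mul_sum_of_degree_lt {P : F[X]} (hvs : Set.InjOn v s)
    (hP : P.degree < #s) (hx : ∀ i ∈ s, x ≠ v i) :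
    P.eval x = (nodal s v).eval x * ∑ i ∈ s, nodalWeight s v i * (x - v i)⁻¹ * P.eval (v i) := by
  conv_lhs => rw [eq_interpolate hvs hP]
  exact eval_interpolate_not_at_node _ hx

theorem eval_eq_eval_nodal_mul_one_add_sum {p : F[X]} (hvs : Set.InjOn v s) (hp : p.Monic)
    (hpdeg : p.degree = #s) (hx : ∀ i ∈ s, x ≠ v i) :
    p.eval x =
      (nodal s v).eval x * (1 + ∑ i ∈ s, nodalWeight s v i * (x - v i)⁻¹ * p.eval (v i)) := by
  have hdeg : (p - nodal s v).degree < #s := by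
    rw [← hpdeg]
    exact degree_sub_lt_left (hpdeg.trans degree_nodal.symm) hp.ne_zero
      (by rw [hp.leadingCoeff, nodal_monic.leadingCoeff])
  have hsub := eval_eq_eval_nodal_mul_sum_of_degree_lt hvs hdeg hx
  have hnode : ∀ i ∈ s, (p - nodal s v).eval (v i) = p.eval (v i) := fun i hi => by
    rw [eval_sub, eval_nodal_at_node hi, sub_zero]
  rw [sum_congr rfl fun i hi => by rw [hnode i hi], eval_sub] at hsub
  linear_combination hsub

theorem sum_nodalWeight_mul_eval_div_sub_eq_one {p : F[X]} (hvs : Set.InjOn v s) (hp : p.Monic)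
    (hpdeg : p.degree = #s) (hpx : p.IsRoot x) (hx : ∀ i ∈ s, x ≠ v i) :
    ∑ i ∈ s, nodalWeight s v i * p.eval (v i) / (v i - x) = 1 := by
  have hsum := eval_eq_eval_nodal_mul_one_add_sum hvs hp hpdeg hx
  rw [hpx.eq_zero, eq_comm, mul_eq_zero, or_iff_right (eval_nodal_not_at_node hx)] at hsum
  calc ∑ i ∈ s, nodalWeight s v i * p.eval (v i) / (v i - x)
      = -∑ i ∈ s, nodalWeight s v i * (x - v i)⁻¹ * p.eval (v i) := by
        rw [← sum_neg_distrib]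
        refine sum_congr rfl fun i _ => ?_
        rw [div_eq_mul_inv, ← neg_sub x, inv_neg]
        ring
    _ = 1 := by linear_combination -hsum

end Lagrange

open Lagrange in
theorem stmt0_general {K : Type*} [Field K] {n : ℕ}
    (a b : Fin n → K)
    (ha : Function.Injective a)
    (hab : ∀ i j, a i ≠ b j)
    (A : Fin n → K)
    (hA : ∀ i, A i = (∏ k, (a i - b k)) / (∏ k ∈ Finset.univ \ {i}, (a i - a k))) :
    ∀ j, ∑ i, A i / (a i - b j) = 1 := by
  intro j
  have hA' : ∀ i, A i = nodalWeight univ a i * (nodal univ b).eval (a i) := fun i => by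
    rw [hA, eval_nodal, nodalWeight, sdiff_singleton_eq_erase, prod_inv_distrib, div_eq_mul_inv,
      mul_comm]
  simp_rw [hA']
  exact sum_nodalWeight_mul_eval_div_sub_eq_one ha.injOn nodal_monic (by rw [degree_nodal])
    (eval_nodal_at_node (mem_univ j)) fun i _ => (hab i j).symm

theorem stmt0 {K : Type*} [Field K] {n : ℕ} (hn : 0 < n)
    (a b : Fin n → K)
    (ha : Function.Injective a) (hb : Function.Injective b)
    (hab : ∀ i j, a i ≠ b j)
    (A : Fin n → K)
    (hA : ∀ i, A i = (∏ k, (a i - b k)) / (∏ k ∈ Finset.univ \ {i}, (a i - a k))) :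
    ∀ j, ∑ i, A i / (a i - b j) = 1 :=
  stmt0_general a b ha hab A hA
end

section
/- Let C be an n×n Cauchy matrix over a field K with data (x_1,...,x_n; x̃_1,...,x̃_n), i.e. C_{ij} = 1/(x_i - x̃_j) where x_1,...,x_n, x̃_1,...,x̃_n are mutually distinct scalars in K. Then for each i, the i-th column sum of C^{-1} equals (∏_k (x_i - x̃_k)) / (∏_{k ≠ i} (x_i - x_k)). -/
/-!
Put `w i = ∏ k, (x i - y k) / ∏ k ≠ i, (x i - x k)`. For each column `j`, `∑ i, w i / (x i - y j)`
is the sum of the values of the monic polynomial `∏ k ≠ j, (X - y k)` of degree `n - 1` at the nodes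
`x i`, weighted as in Lagrange interpolation; that sum is the leading coefficient, `1`. Hence
`w ᵥ* C = 1`, i.e. `w = 1 ᵥ* C⁻¹`, whose `i`-th entry is the `i`-th column sum of `C⁻¹`.
Invertibility of `C` also comes from interpolation: if `C *ᵥ w = 0`, the interpolant through the
nodes `y` with values proportional to `w` vanishes at the `n` points `x i`, so it is zero.
-/

open Finset Polynomial Lagrange Matrix

section Cauchy

variable {K ι : Type*} [Field K] [Fintype ι] [DecidableEq ι]

def cauchyMatrix (x y : ι → K) : Matrix ι ι K :=
  Matrix.of fun i j => (x i - y j)⁻¹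

theorem sum_prod_sub_div_prod_erase_sub_eq_one {x : ι → K} (hx : Function.Injective x)
    (y : ι → K) (j : ι) :
    ∑ i, (∏ k ∈ univ.erase j, (x i - y k)) / ∏ k ∈ univ.erase i, (x i - x k) = 1 := by
  have hcard : #(univ.erase j) = Fintype.card ι - 1 := card_erase_of_mem (mem_univ j)
  have hdeg : (nodal (univ.erase j) y).degree < #(univ : Finset ι) := by
    rw [degree_nodal, hcard, card_univ]
    exact_mod_cast Nat.sub_lt (Fintype.card_pos_iff.2 ⟨j⟩) Nat.one_pos
  have hcoeff := coeff_eq_sum hx.injOn hdeg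
  simp only [eval_nodal, card_univ, ← hcard] at hcoeff
  rw [← hcoeff]
  simpa only [natDegree_nodal] using (nodal_monic (s := univ.erase j) (v := y)).coeff_natDegree

theorem vecMul_cauchyMatrix {x y : ι → K} (hx : Function.Injective x) (hxy : ∀ i j, x i ≠ y j) :
    (fun i => (∏ k, (x i - y k)) / ∏ k ∈ univ.erase i, (x i - x k)) ᵥ* cauchyMatrix x y = 1 := by
  funext j
  simp only [vecMul, dotProduct, cauchyMatrix, of_apply, Pi.one_apply]
  rw [← sum_prod_sub_div_prod_erase_sub_eq_one hx y j]
  refine sum_congr rfl fun i _ => ?_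
  rw [← mul_prod_erase _ _ (mem_univ j), mul_div_assoc, mul_comm,
    inv_mul_cancel_left₀ (sub_ne_zero.2 (hxy i j))]

theorem isUnit_det_cauchyMatrix {x y : ι → K} (hx : Function.Injective x)
    (hy : Function.Injective y) (hxy : ∀ i j, x i ≠ y j) : IsUnit (cauchyMatrix x y).det := by
  rw [isUnit_iff_ne_zero]
  intro hdet
  obtain ⟨w, hw0, hw⟩ := Matrix.exists_mulVec_eq_zero_iff.2 hdet
  have hweight (j : ι) : nodalWeight univ y j ≠ 0 := nodalWeight_ne_zero hy.injOn (mem_univ j)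
  set r : ι → K := fun j => w j / nodalWeight univ y j
  have hr : interpolate univ y r = 0 := by
    refine eq_zero_of_degree_lt_of_eval_index_eq_zero _ hx.injOn (degree_interpolate_lt r hy.injOn)
      fun i _ => ?_
    have hsum : ∑ j, nodalWeight univ y j * (x i - y j)⁻¹ * r j = (cauchyMatrix x y *ᵥ w) i :=
      sum_congr rfl fun j _ => by rw [mul_right_comm, mul_div_cancel₀ _ (hweight j), mul_comm]; rfl
    rw [eval_interpolate_not_at_node r fun j _ => hxy i j, hsum, hw, Pi.zero_apply, mul_zero]
  refine hw0 (funext fun j => ?_)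
  have hrj := eval_interpolate_at_node r hy.injOn (mem_univ j)
  rw [hr, eval_zero, eq_comm, div_eq_zero_iff] at hrj
  exact hrj.resolve_right (hweight j)

end Cauchy

theorem stmt2_general {K : Type*} [Field K] {n : ℕ}
    (x y : Fin n → K) (hx : Function.Injective x) (hy : Function.Injective y)
    (hxy : ∀ i j, x i ≠ y j)
    (C : Matrix (Fin n) (Fin n) K) (hC : ∀ i j, C i j = (x i - y j)⁻¹) :
    ∀ i, ∑ j, C⁻¹ j i = (∏ k, (x i - y k)) / (∏ k ∈ Finset.univ \ {i}, (x i - x k)) := by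
  obtain rfl : C = cauchyMatrix x y := Matrix.ext hC
  intro i
  have hinv := congrArg (· ᵥ* (cauchyMatrix x y)⁻¹) (vecMul_cauchyMatrix hx hxy)
  simp only [vecMul_vecMul, mul_nonsing_inv _ (isUnit_det_cauchyMatrix hx hy hxy),
    vecMul_one] at hinv
  calc ∑ j, (cauchyMatrix x y)⁻¹ j i = (1 ᵥ* (cauchyMatrix x y)⁻¹) i := by
        simp only [vecMul, dotProduct, Pi.one_apply, one_mul]
    _ = _ := by rw [← hinv, sdiff_singleton_eq_erase]

theorem stmt2 {K : Type*} [Field K] {n : ℕ} (hn : 0 < n)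
    (x y : Fin n → K) (hx : Function.Injective x) (hy : Function.Injective y)
    (hxy : ∀ i j, x i ≠ y j)
    (C : Matrix (Fin n) (Fin n) K) (hC : ∀ i j, C i j = (x i - y j)⁻¹) :
    ∀ i, ∑ j, C⁻¹ j i = (∏ k, (x i - y k)) / (∏ k ∈ Finset.univ \ {i}, (x i - x k)) :=
  stmt2_general x y hx hy hxy C hC
end

section
/- Let C be an n×n Cauchy matrix over a field K with data (x_1,...,x_n; x̃_1,...,x̃_n). Then for each i, the i-th row sum of C^{-1} equals -(∏_k (x̃_i - x_k)) / (∏_{k ≠ i} (x̃_i - x̃_k)). -/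
/-! With the weights `w j = ∏_{k ≠ j} (y j - y k)⁻¹`, the barycentric form of Lagrange
interpolation at the nodes `y` says that every polynomial `p` of degree `< n` satisfies
`p (x i) = ∏_k (x i - y k) * (C *ᵥ (w * p ∘ y)) i`. For `p = ∏_k (X - x k) - ∏_k (X - y k)`
this gives `C *ᵥ (w * ∏_k (y - x k)) = -1`, which is the row sum formula once `C` is known to be
invertible. Invertibility follows from the same identity: if `C *ᵥ c = 0`, the interpolant of
`c / w` vanishes at the `n` distinct points `x i`, hence is zero. -/

open Finset Polynomial Lagrange

theorem Lagrange.degree_nodal_sub_nodal_lt {R ι : Type*} [CommRing R] [Nontrivial R]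
    {s : Finset ι} (x y : ι → R) : (nodal s x - nodal s y).degree < #s := by
  by_cases h : nodal s x - nodal s y = 0
  · rw [h, degree_zero]
    exact WithBot.bot_lt_coe _
  rw [← degree_nodal (v := x)]
  exact degree_sub_lt_left (by rw [degree_nodal, degree_nodal]) nodal_ne_zero
    (by rw [nodal_monic.leadingCoeff, nodal_monic.leadingCoeff])

namespace Matrix

variable {K : Type*} [Field K] {m ι : Type*} [Fintype ι]

theorem sum_inv_apply_of_mulVec_eq_one {R : Type*} [CommRing R] [DecidableEq ι]
    {A : Matrix ι ι R} (hA : IsUnit A.det) {v : ι → R} (hv : A *ᵥ v = 1) (i : ι) :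
    ∑ j, A⁻¹ i j = v i := by
  have : A⁻¹ *ᵥ (A *ᵥ v) = v := by
    rw [mulVec_mulVec, nonsing_inv_mul _ hA, one_mulVec]
  rw [hv] at this
  simpa [mulVec, dotProduct] using congrFun this i

def cauchy (x : m → K) (y : ι → K) : Matrix m ι K :=
  of fun i j => (x i - y j)⁻¹

variable [DecidableEq ι]

theorem eval_interpolate_eq_mulVec_cauchy {x : m → K} {y : ι → K} (hxy : ∀ i j, x i ≠ y j)
    (r : ι → K) (i : m) :
    eval (x i) (interpolate univ y r) =
      eval (x i) (nodal univ y) * (cauchy x y *ᵥ fun j => nodalWeight univ y j * r j) i := by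
  rw [eval_interpolate_not_at_node r fun j _ => hxy i j]
  congr 1
  exact sum_congr rfl fun j _ => by simp only [cauchy, of_apply]; ring

theorem det_cauchy_ne_zero {x y : ι → K} (hx : x.Injective) (hy : y.Injective)
    (hxy : ∀ i j, x i ≠ y j) : (cauchy x y).det ≠ 0 := by
  rw [Ne, ← exists_mulVec_eq_zero_iff]
  rintro ⟨c, hc0, hc⟩
  have hw (j : ι) : nodalWeight univ y j ≠ 0 := nodalWeight_ne_zero hy.injOn (mem_univ j)
  set r : ι → K := fun j => c j / nodalWeight univ y j
  have hcr : (fun j => nodalWeight univ y j * r j) = c := funext fun j => mul_div_cancel₀ _ (hw j)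
  have hr : interpolate univ y r = 0 :=
    eq_zero_of_degree_lt_of_eval_index_eq_zero _ hx.injOn (degree_interpolate_lt r hy.injOn)
      fun i _ => by rw [eval_interpolate_eq_mulVec_cauchy hxy, hcr, hc, Pi.zero_apply, mul_zero]
  refine hc0 (funext fun j => ?_)
  have := eval_interpolate_at_node r hy.injOn (mem_univ j)
  rw [hr, eval_zero, eq_comm, div_eq_zero_iff] at this
  exact this.resolve_right (hw j)

theorem cauchy_mulVec_nodalWeight_mul_eval_nodal {x y : ι → K} (hy : y.Injective)
    (hxy : ∀ i j, x i ≠ y j) :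
    cauchy x y *ᵥ (fun j => nodalWeight univ y j * eval (y j) (nodal univ x)) = -1 := by
  have hp :
      nodal univ x - nodal univ y = interpolate univ y fun j => eval (y j) (nodal univ x) := by
    refine eq_interpolate_of_eval_eq _ hy.injOn (degree_nodal_sub_nodal_lt x y) fun j _ => ?_
    rw [eval_sub, eval_nodal_at_node (mem_univ j), sub_zero]
  funext i
  have := congrArg (eval (x i)) hp
  rw [eval_interpolate_eq_mulVec_cauchy hxy, eval_sub, eval_nodal_at_node (mem_univ i), zero_sub,
    ← mul_neg_one] at this
  exact (mul_left_cancel₀ (eval_nodal_not_at_node fun j _ => hxy i j) this).symm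

end Matrix

theorem stmt3_general {K : Type*} [Field K] {n : ℕ}
    (x y : Fin n → K) (hx : Function.Injective x) (hy : Function.Injective y)
    (hxy : ∀ i j, x i ≠ y j)
    (C : Matrix (Fin n) (Fin n) K) (hC : ∀ i j, C i j = (x i - y j)⁻¹) :
    ∀ i, ∑ j, C⁻¹ i j = -((∏ k, (y i - x k)) / (∏ k ∈ Finset.univ \ {i}, (y i - y k))) := by
  obtain rfl : C = Matrix.cauchy x y := Matrix.ext hC
  intro i
  have hv := congrArg Neg.neg (Matrix.cauchy_mulVec_nodalWeight_mul_eval_nodal hy hxy)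
  rw [← Matrix.mulVec_neg, neg_neg] at hv
  rw [Matrix.sum_inv_apply_of_mulVec_eq_one
    (Matrix.det_cauchy_ne_zero hx hy hxy).isUnit hv, Pi.neg_apply, nodalWeight,
    eval_nodal, sdiff_singleton_eq_erase, prod_inv_distrib, div_eq_mul_inv, mul_comm]

theorem stmt3 {K : Type*} [Field K] {n : ℕ} (hn : 0 < n)
    (x y : Fin n → K) (hx : Function.Injective x) (hy : Function.Injective y)
    (hxy : ∀ i j, x i ≠ y j)
    (C : Matrix (Fin n) (Fin n) K) (hC : ∀ i j, C i j = (x i - y j)⁻¹) :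
    ∀ i, ∑ j, C⁻¹ i j = -((∏ k, (y i - x k)) / (∏ k ∈ Finset.univ \ {i}, (y i - y k))) :=
  stmt3_general x y hx hy hxy C hC
end

section
/- Let C and C' be Cauchy matrices over a field K, with C having data (x_i; x̃_i) and C' having data (y_i; ỹ_i). Then (y_i; ỹ_i) is also data for C if and only if the differences x_i - y_i and x̃_i - ỹ_i are all equal and independent of i. -/
theorem stmt4 {K : Type*} [Field K] {n : ℕ} (hn : 0 < n)
    (x xt y yt : Fin n → K)
    (hx : Function.Injective x) (hxt : Function.Injective xt) (hxxt : ∀ i j, x i ≠ xt j)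
    (hy : Function.Injective y) (hyt : Function.Injective yt) (hyyt : ∀ i j, y i ≠ yt j)
    (C : Matrix (Fin n) (Fin n) K) (hC : ∀ i j, C i j = (x i - xt j)⁻¹) :
    (∀ i j, C i j = (y i - yt j)⁻¹) ↔
      ∃ ζ : K, (∀ i, x i - y i = ζ) ∧ (∀ i, xt i - yt i = ζ) := by
  have i0 : Fin n := ⟨0, hn⟩
  constructor
  · intro h
    have key : ∀ i j, x i - xt j = y i - yt j := by
      intro i j
      have h1 : (x i - xt j)⁻¹ = (y i - yt j)⁻¹ := by rw [← hC i j, h i j]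
      have hx0 : x i - xt j ≠ 0 := sub_ne_zero.mpr (hxxt i j)
      have hy0 : y i - yt j ≠ 0 := sub_ne_zero.mpr (hyyt i j)
      have := congrArg (·⁻¹) h1
      simpa [inv_inv] using this
    refine ⟨x i0 - y i0, ?_, ?_⟩
    · intro i
      have h1 := key i i0
      have h2 := key i0 i0
      linear_combination h1 - h2
    · intro j
      have h1 := key i0 j
      linear_combination -h1
  · rintro ⟨ζ, h1, h2⟩ i j
    rw [hC i j]
    congr 1
    linear_combination h1 i - h2 j
end

section
/- Let (X, X̃) be a Cauchy pair on a finite-dimensional vector space V over a field K. Then no scalar in K is both an eigenvalue of X and an eigenvalue of X̃. -/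
def IsCauchyPair (K V : Type*) [Field K] [AddCommGroup V] [Module K V]
    (X Xt : Module.End K V) : Prop :=
  (⨆ μ : K, X.eigenspace μ) = ⊤ ∧
  (⨆ μ : K, Xt.eigenspace μ) = ⊤ ∧
  Module.rank K (LinearMap.range (X - Xt)) = 1 ∧
  ∀ W : Submodule K V, W.map (X : V →ₗ[K] V) ≤ W → W.map (Xt : V →ₗ[K] V) ≤ W →
    W = ⊥ ∨ W = ⊤

private lemma cauchy_aux {K V : Type*} [Field K] [AddCommGroup V] [Module K V]
    {X Xt : Module.End K V}
    (hirr : ∀ W : Submodule K V, W.map (X : V →ₗ[K] V) ≤ W →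
      W.map (Xt : V →ₗ[K] V) ≤ W → W = ⊥ ∨ W = ⊤)
    (hD0 : X - Xt ≠ 0) {μ : K} (hX : X.HasEigenvalue μ) :
    ∃ v : V, X v = μ • v ∧ (X - Xt) v ≠ 0 := by
  set W : Submodule K V := X.eigenspace μ ⊓ LinearMap.ker (X - Xt : Module.End K V) with hW
  have hmem : ∀ x ∈ W, X x = μ • x ∧ X x = Xt x := by
    rintro x ⟨hx1, hx2⟩
    have h1 : X x = μ • x := Module.End.mem_eigenspace_iff.mp hx1
    have h2 : (X - Xt) x = 0 := hx2
    refine ⟨h1, ?_⟩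
    have : X x - Xt x = 0 := h2
    linear_combination (norm := module) this
  have hXinv : ∀ x ∈ W, X x ∈ W := by
    intro x hx
    obtain ⟨hx1, hx2⟩ := hx
    have h1 : X x = μ • x := Module.End.mem_eigenspace_iff.mp hx1
    have h2 : (X - Xt) x = 0 := hx2
    constructor
    · rw [h1]; exact Submodule.smul_mem _ μ hx1
    · show X x ∈ LinearMap.ker (X - Xt)
      rw [h1, LinearMap.mem_ker, map_smul, h2, smul_zero]
  have hmW1 : W.map (X : V →ₗ[K] V) ≤ W := by
    rw [Submodule.map_le_iff_le_comap]; intro x hx; exact hXinv x hx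
  have hmW2 : W.map (Xt : V →ₗ[K] V) ≤ W := by
    rw [Submodule.map_le_iff_le_comap]; intro x hx
    have := (hmem x hx).2
    show Xt x ∈ W
    rw [← this]
    exact hXinv x hx
  rcases hirr W hmW1 hmW2 with hbot | htop
  · obtain ⟨v, hv, hv0⟩ := (Submodule.ne_bot_iff _).mp hX
    refine ⟨v, Module.End.mem_eigenspace_iff.mp hv, ?_⟩
    intro hdv
    exact hv0 (by simpa [hbot] using (show v ∈ W from ⟨hv, hdv⟩))
  · exact absurd (LinearMap.ext fun x => (sub_eq_zero.mp ((show x ∈ W from htop ▸ Submodule.mem_top).2 : (X - Xt) x = 0) : X x = Xt x)) (by intro he; exact hD0 (by ext y; simp [he]))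

theorem stmt5 {K V : Type*} [Field K] [AddCommGroup V] [Module K V] [FiniteDimensional K V]
    {X Xt : Module.End K V} (h : IsCauchyPair K V X Xt) (μ : K) :
    ¬(X.HasEigenvalue μ ∧ Xt.HasEigenvalue μ) := by
  rintro ⟨hX, hXt⟩
  obtain ⟨hdX, hdXt, hrank, hirr⟩ := h
  have hirr' : ∀ W : Submodule K V, W.map (Xt : V →ₗ[K] V) ≤ W →
      W.map (X : V →ₗ[K] V) ≤ W → W = ⊥ ∨ W = ⊤ := fun W h1 h2 => hirr W h2 h1
  -- D ≠ 0
  have hD0 : X - Xt ≠ 0 := by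
    intro h0
    rw [h0, LinearMap.range_zero] at hrank
    simp at hrank
  have hD0' : Xt - X ≠ 0 := fun h0 => hD0 (by
    have : -(Xt - X) = 0 := by rw [h0, neg_zero]
    simpa using this)
  -- generator of range D
  obtain ⟨r0, hr0⟩ := rank_le_one_iff.mp hrank.le
  have hr : ∀ x ∈ LinearMap.range (X - Xt), ∃ c : K, c • (r0 : V) = x := by
    intro x hx
    obtain ⟨c, hc⟩ := hr0 ⟨x, hx⟩
    exact ⟨c, congrArg Subtype.val hc⟩
  -- eigenvectors with nonzero D-image
  obtain ⟨v, hv, hDv⟩ := cauchy_aux hirr hD0 hX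
  obtain ⟨w, hw, hDw'⟩ := cauchy_aux hirr' hD0' hXt
  have hDw : (X - Xt) w ≠ 0 := by
    intro h0; apply hDw'
    have : (X - Xt) w = X w - Xt w := rfl
    rw [this] at h0
    show Xt w - X w = 0
    rw [← neg_sub, h0, neg_zero]
  -- scalars
  obtain ⟨a, ha⟩ := hr ((X - Xt) v) (LinearMap.mem_range_self _ v)
  obtain ⟨b, hb⟩ := hr ((X - Xt) w) (LinearMap.mem_range_self _ w)
  have ha0 : a ≠ 0 := fun h0 => hDv (by rw [← ha, h0, zero_smul])
  have hb0 : b ≠ 0 := fun h0 => hDw (by rw [← hb, h0, zero_smul])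
  have hr0ne : (r0 : V) ≠ 0 := fun h0 => hDv (by rw [← ha, h0, smul_zero])
  -- z with D z = 0 and (X - μ) z = (a*b) • r0
  set z : V := a • w - b • v with hz
  have hXz : X z - μ • z = (a * b) • (r0 : V) := by
    have hXw : X w = μ • w + b • (r0 : V) := by
      have : (X - Xt) w = X w - Xt w := rfl
      have h1 : X w - Xt w = b • (r0 : V) := by rw [← this, hb]
      have h2 : Xt w = μ • w := hw
      linear_combination (norm := module) h1 + h2
    rw [hz]
    rw [map_sub, map_smul, map_smul, hXw, hv]
    match_scalars <;> ring
  -- the X-invariant complement of the μ-eigenspace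
  set C : Submodule K V := ⨆ lam : K, ⨆ _ : lam ≠ μ, X.eigenspace lam with hC
  have hCX : ∀ x ∈ C, X x ∈ C := by
    intro x hx
    have hle : C ≤ Submodule.comap (X : V →ₗ[K] V) C := by
      rw [hC]
      refine iSup_le fun lam => iSup_le fun hne => ?_
      intro y hy
      have : X y = lam • y := Module.End.mem_eigenspace_iff.mp hy
      show X y ∈ C
      rw [this]
      have hle2 : X.eigenspace lam ≤ C :=
        le_iSup_of_le lam (le_iSup (fun _ : lam ≠ μ => X.eigenspace lam) hne)
      exact Submodule.smul_mem _ _ (hle2 hy)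
    exact hle hx
  -- ⊤ = eigenspace μ ⊔ C
  have hsup : X.eigenspace μ ⊔ C = ⊤ := by
    rw [← hdX]
    apply le_antisymm
    · exact sup_le (le_iSup _ μ) (iSup_le fun lam => iSup_le fun _ => le_iSup _ lam)
    · refine iSup_le fun lam => ?_
      by_cases hlam : lam = μ
      · subst hlam; exact le_sup_left
      · refine le_trans ?_ le_sup_right
        exact le_iSup_of_le lam (le_iSup (fun _ : lam ≠ μ => X.eigenspace lam) hlam)
  have hdisj : Disjoint (X.eigenspace μ) C := X.eigenspaces_iSupIndep μ
  -- r0 ∈ C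
  have hr0C : (r0 : V) ∈ C := by
    have hzmem : z ∈ X.eigenspace μ ⊔ C := hsup ▸ Submodule.mem_top
    obtain ⟨e, he, c, hc, hec⟩ := Submodule.mem_sup.mp hzmem
    have hXe : X e = μ • e := Module.End.mem_eigenspace_iff.mp he
    have hXcC : X c - μ • c ∈ C := Submodule.sub_mem _ (hCX c hc) (Submodule.smul_mem _ _ hc)
    have hkey : (a * b) • (r0 : V) = X c - μ • c := by
      rw [← hXz, ← hec]
      rw [map_add]
      linear_combination (norm := module) hXe
    have hab : (a * b) ≠ 0 := mul_ne_zero ha0 hb0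
    have : (r0 : V) = (a * b)⁻¹ • (X c - μ • c) := by
      rw [← hkey, smul_smul, inv_mul_cancel₀ hab, one_smul]
    rw [this]
    exact Submodule.smul_mem _ _ hXcC
  -- C is invariant under both
  have hrangeC : LinearMap.range (X - Xt) ≤ C := by
    rintro x hx
    obtain ⟨c, hc⟩ := hr x hx
    rw [← hc]
    exact Submodule.smul_mem _ _ hr0C
  have hCXt : ∀ x ∈ C, Xt x ∈ C := by
    intro x hx
    have h1 : Xt x = X x - (X - Xt) x := by
      have : (X - Xt) x = X x - Xt x := rfl
      rw [this]; abel
    rw [h1]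
    exact Submodule.sub_mem _ (hCX x hx) (hrangeC (LinearMap.mem_range_self _ x))
  -- conclude
  rcases hirr C (Submodule.map_le_iff_le_comap.mpr fun x hx => hCX x hx)
      (Submodule.map_le_iff_le_comap.mpr fun x hx => hCXt x hx) with hbot | htop
  · exact hr0ne (by simpa [hbot] using hr0C)
  · have : X.eigenspace μ = ⊥ := by
      have := hdisj
      rw [htop] at this
      simpa [disjoint_top] using this
    exact hX this
end

section
/- Let (X, X̃) be a Cauchy pair on a finite-dimensional vector space V over a field K. Then X is multiplicity-free, i.e. X is diagonalizable and each eigenspace of X has dimension 1. -/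
theorem stmt6 {K V : Type*} [Field K] [AddCommGroup V] [Module K V] [FiniteDimensional K V]
    {X Xt : Module.End K V} (h : IsCauchyPair K V X Xt) :
    (⨆ μ : K, X.eigenspace μ) = ⊤ ∧
    ∀ μ : K, X.HasEigenvalue μ → Module.finrank K (X.eigenspace μ) = 1 := by
  obtain ⟨h1, h2, h3, h4⟩ := h
  refine ⟨h1, fun μ hμ => ?_⟩
  set D := X - Xt with hDdef
  have hrange : Module.finrank K (LinearMap.range D) = 1 :=
    Module.rank_eq_one_iff_finrank_eq_one.mp h3
  have hDne : D ≠ 0 := by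
    intro h0
    rw [h0, LinearMap.range_zero] at hrange
    simp at hrange
  set E := X.eigenspace μ with hEdef
  have hEne : E ≠ ⊥ := hμ
  have hEpos : 0 < Module.finrank K E := by
    rcases Nat.eq_zero_or_pos (Module.finrank K E) with h0 | h0
    · exact absurd (Submodule.finrank_eq_zero.mp h0) hEne
    · exact h0
  by_contra hne
  have hE2 : 2 ≤ Module.finrank K E := by omega
  set W := E ⊓ LinearMap.ker D with hWdef
  have hker : Module.finrank K (LinearMap.ker D) + 1 = Module.finrank K V := by
    have := LinearMap.finrank_range_add_finrank_ker D
    omega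
  have hsup : Module.finrank K ↥(E ⊔ LinearMap.ker D) ≤ Module.finrank K V :=
    Submodule.finrank_le _
  have hWpos : 0 < Module.finrank K ↥(E ⊓ LinearMap.ker D) := by
    have heq := Submodule.finrank_sup_add_finrank_inf_eq E (LinearMap.ker D)
    omega
  have hWpos' : 0 < Module.finrank K W := hWpos
  have hWne : W ≠ ⊥ := by
    intro h0
    rw [h0, finrank_bot] at hWpos'
    omega
  -- W invariant under X
  have memW : ∀ v ∈ W, X v = μ • v ∧ μ • v ∈ W := by
    intro v hv
    have hvE : v ∈ E := hv.1
    have hx : X v = μ • v := Module.End.mem_eigenspace_iff.mp hvE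
    exact ⟨hx, Submodule.smul_mem W μ hv⟩
  have hX : W.map (X : V →ₗ[K] V) ≤ W := by
    rintro x ⟨v, hv, rfl⟩
    obtain ⟨hx, hm⟩ := memW v hv
    rw [hx]; exact hm
  have hXt : W.map (Xt : V →ₗ[K] V) ≤ W := by
    rintro x ⟨v, hv, rfl⟩
    obtain ⟨hx, hm⟩ := memW v hv
    have hvker : D v = 0 := hv.2
    have : Xt v = μ • v := by
      have : X v - Xt v = 0 := by
        simpa [hDdef, LinearMap.sub_apply] using hvker
      have hx' : Xt v = X v := by linear_combination (norm := module) -this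
      rw [hx', hx]
    rw [this]; exact hm
  rcases h4 W hX hXt with h0 | htop
  · exact hWne h0
  · have : LinearMap.ker D = ⊤ := by
      rw [eq_top_iff]
      calc (⊤ : Submodule K V) = W := htop.symm
        _ ≤ LinearMap.ker D := inf_le_right
    exact hDne (LinearMap.ker_eq_top.mp this)
end

section
/- Let K be a field and C ∈ Mat_n(K) a Cauchy matrix with data (x_i; x̃_i). Let V be an n-dimensional K-vector space with bases {v_i} and {w_i} such that C is the transition matrix from {v_i} to {w_i}. Let X be the endomorphism with Xv_i = x_i v_i and X̃ the endomorphism with X̃w_i = x̃_i w_i. Then (X, X̃) is a Cauchy pair on V, i.e. X and X̃ are diagonalizable, X - X̃ has rank 1, and no proper nonzero subspace of V is invariant under both X and X̃. -/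
open Module Polynomial

namespace Module.End

lemma aeval_apply_mem_of_mem_invtSubmodule {R M : Type*} [CommSemiring R] [AddCommMonoid M]
    [Module R M] {f : End R M} {W : Submodule R M} (hW : W ∈ f.invtSubmodule) (p : R[X])
    {u : M} (hu : u ∈ W) : aeval f p u ∈ W := by
  induction p using Polynomial.induction_on' with
  | add p q hp hq => simpa only [map_add, LinearMap.add_apply] using W.add_mem hp hq
  | monomial k a =>
    have hpow : (f ^ k) u ∈ W := by
      rw [pow_apply]
      exact ((f.mem_invtSubmodule_iff_mapsTo).1 hW).iterate k hu
    simpa only [aeval_monomial, mul_apply, algebraMap_end_apply] using W.smul_mem a hpow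

variable {K V ι : Type*} [Field K] [AddCommGroup V] [Module K V]

lemma iSup_eigenspace_eq_top_of_basis (b : Basis ι K V) {f : End K V} {μ : ι → K}
    (hf : ∀ i, f (b i) = μ i • b i) : ⨆ a, f.eigenspace a = ⊤ := by
  rw [eq_top_iff, ← b.span_eq, Submodule.span_le]
  rintro _ ⟨i, rfl⟩
  exact le_iSup f.eigenspace (μ i) (mem_eigenspace_iff.2 (hf i))

/-- The Lagrange interpolation polynomial of `μ i`, evaluated at `f`, is the projection onto
the `i`-th coordinate. -/
lemma basis_mem_of_mem_invtSubmodule [Fintype ι] (b : Basis ι K V) {f : End K V} {μ : ι → K}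
    (hμ : Function.Injective μ) (hf : ∀ i, f (b i) = μ i • b i) {W : Submodule K V}
    (hW : W ∈ f.invtSubmodule) {u : V} (hu : u ∈ W) {i : ι} (hi : b.repr u i ≠ 0) :
    b i ∈ W := by
  classical
  set p := Lagrange.basis Finset.univ μ i
  have heval : ∀ j, p.eval (μ j) = if j = i then 1 else 0 := by
    intro j
    split_ifs with hji
    · subst hji
      exact Lagrange.eval_basis_self hμ.injOn (Finset.mem_univ j)
    · exact Lagrange.eval_basis_of_ne (Ne.symm hji) (Finset.mem_univ j)
  have hproj : aeval f p u = b.repr u i • b i := by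
    conv_lhs => rw [← b.sum_repr u]
    simp only [map_sum, map_smul, aeval_apply_of_mem_apply_eq_smul (hf _), heval, ite_smul,
      one_smul, zero_smul, smul_ite, smul_zero, Finset.sum_ite_eq', Finset.mem_univ, if_true]
  have hmem := W.smul_mem (b.repr u i)⁻¹ (hproj ▸ aeval_apply_mem_of_mem_invtSubmodule hW p hu)
  rwa [smul_smul, inv_mul_cancel₀ hi, one_smul] at hmem

end Module.End

lemma LinearMap.range_eq_span_singleton_of_basis {K V V' ι : Type*} [Field K] [AddCommGroup V]
    [Module K V] [AddCommGroup V'] [Module K V'] [Nonempty ι] (b : Basis ι K V)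
    {f : V →ₗ[K] V'} {s : V'} (hf : ∀ j, f (b j) = s) : range f = Submodule.span K {s} := by
  rw [range_eq_map, ← b.span_eq, Submodule.map_span, ← Set.range_comp]
  simp only [Function.comp_def, hf, Set.range_const]

section CauchyPair

variable {K V ι : Type*} [Field K] [AddCommGroup V] [Module K V] [Fintype ι]

lemma cauchy_sub_apply_eq_sum {x xt : ι → K} (hxxt : ∀ i j, x i ≠ xt j) {v w : ι → V}
    (hw : ∀ j, w j = ∑ i, (x i - xt j)⁻¹ • v i) {X Xt : End K V}
    (hX : ∀ i, X (v i) = x i • v i) (hXt : ∀ j, Xt (w j) = xt j • w j) (j : ι) :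
    (X - Xt) (w j) = ∑ i, v i := by
  rw [LinearMap.sub_apply, hXt, hw, map_sum, Finset.smul_sum, ← Finset.sum_sub_distrib]
  refine Finset.sum_congr rfl fun i _ => ?_
  rw [map_smul, hX, smul_smul, smul_smul, ← sub_smul, mul_comm (xt j), ← mul_sub,
    inv_mul_cancel₀ (sub_ne_zero.2 (hxxt i j)), one_smul]

lemma eq_bot_or_eq_top_of_mem_invtSubmodule_of_sub_apply_eq (v w : Basis ι K V) {X Xt : End K V}
    {x xt : ι → K} (hx : Function.Injective x) (hxt : Function.Injective xt)
    (hX : ∀ i, X (v i) = x i • v i) (hXt : ∀ i, Xt (w i) = xt i • w i)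
    {s : V} (hs : ∀ j, (X - Xt) (w j) = s) (hs_repr : ∀ i, v.repr s i ≠ 0)
    {W : Submodule K V} (hWX : W ∈ X.invtSubmodule) (hWXt : W ∈ Xt.invtSubmodule) :
    W = ⊥ ∨ W = ⊤ := by
  refine or_iff_not_imp_left.2 fun hW => ?_
  obtain ⟨u, hu, hu0⟩ := (Submodule.ne_bot_iff W).1 hW
  obtain ⟨j, hj⟩ := Finsupp.ne_iff.1 ((w.repr.map_ne_zero_iff).2 hu0)
  have hwj : w j ∈ W := End.basis_mem_of_mem_invtSubmodule w hxt hXt hWXt hu hj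
  have hsW : s ∈ W := hs j ▸ W.sub_mem (hWX hwj) (hWXt hwj)
  rw [eq_top_iff, ← v.span_eq, Submodule.span_le, Set.range_subset_iff]
  exact fun i => End.basis_mem_of_mem_invtSubmodule v hx hX hWX hsW (hs_repr i)

end CauchyPair

theorem stmt9_general {K V : Type*} [Field K] [AddCommGroup V] [Module K V]
    {n : ℕ} (hn : 0 < n)
    (x xt : Fin n → K)
    (hx : Function.Injective x) (hxt : Function.Injective xt) (hxxt : ∀ i j, x i ≠ xt j)
    (C : Matrix (Fin n) (Fin n) K) (hC : ∀ i j, C i j = (x i - xt j)⁻¹)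
    (v w : Module.Basis (Fin n) K V)
    (htrans : ∀ j, w j = ∑ i, C i j • v i)
    (X Xt : Module.End K V)
    (hX : ∀ i, X (v i) = x i • v i) (hXt : ∀ i, Xt (w i) = xt i • w i) :
    IsCauchyPair K V X Xt := by
  have : Nonempty (Fin n) := ⟨⟨0, hn⟩⟩
  have hw : ∀ j, w j = ∑ i, (x i - xt j)⁻¹ • v i := by simpa only [hC] using htrans
  have hs := cauchy_sub_apply_eq_sum hxxt hw hX hXt
  have hs_repr : ∀ i, v.repr (∑ i, v i) i ≠ 0 := by
    simp [map_sum, Finsupp.single_apply]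
  have hs0 : ∑ i, v i ≠ 0 := fun h => hs_repr ⟨0, hn⟩ (by simp [h])
  refine ⟨End.iSup_eigenspace_eq_top_of_basis v hX, End.iSup_eigenspace_eq_top_of_basis w hXt,
    ?_, fun W hWX hWXt => ?_⟩
  · rw [LinearMap.range_eq_span_singleton_of_basis w hs, ← finrank_eq_rank,
      finrank_span_singleton hs0, Nat.cast_one]
  · exact eq_bot_or_eq_top_of_mem_invtSubmodule_of_sub_apply_eq v w hx hxt hX hXt hs hs_repr
      ((X.mem_invtSubmodule_iff_map_le).2 hWX) ((Xt.mem_invtSubmodule_iff_map_le).2 hWXt)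

theorem stmt9 {K V : Type*} [Field K] [AddCommGroup V] [Module K V] [FiniteDimensional K V]
    {n : ℕ} (hn : 0 < n)
    (x xt : Fin n → K)
    (hx : Function.Injective x) (hxt : Function.Injective xt) (hxxt : ∀ i j, x i ≠ xt j)
    (C : Matrix (Fin n) (Fin n) K) (hC : ∀ i j, C i j = (x i - xt j)⁻¹)
    (v w : Module.Basis (Fin n) K V)
    (htrans : ∀ j, w j = ∑ i, C i j • v i)
    (X Xt : Module.End K V)
    (hX : ∀ i, X (v i) = x i • v i) (hXt : ∀ i, Xt (w i) = xt i • w i) :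
    IsCauchyPair K V X Xt :=
  stmt9_general hn x xt hx hxt hxxt C hC v w htrans X Xt hX hXt
end

section
/- Let (X, X̃) be a Cauchy pair on V, set Δ = X - X̃, and let η be a nonzero vector in ΔV. For each eigenvalue x_i of X, let E_i be the corresponding primitive idempotent. Then E_i η ≠ 0 for every i, and {E_i η} is a basis for V. -/
theorem stmt10 {K V : Type*} [Field K] [AddCommGroup V] [Module K V] [FiniteDimensional K V]
    {n : ℕ} {X Xt : Module.End K V} (h : IsCauchyPair K V X Xt)
    (x : Fin n → K) (hxinj : Function.Injective x)
    (hxeig : ∀ i, X.HasEigenvalue (x i))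
    (hxall : ∀ μ : K, X.HasEigenvalue μ → ∃ i, x i = μ)
    (E : Fin n → Module.End K V)
    (hE1 : ∀ i, ∀ u ∈ X.eigenspace (x i), E i u = u)
    (hE0 : ∀ i j, i ≠ j → ∀ u ∈ X.eigenspace (x j), E i u = 0)
    (η : V) (hη : η ∈ LinearMap.range (X - Xt)) (hη0 : η ≠ 0) :
    (∀ i, E i η ≠ 0) ∧ LinearIndependent K (fun i => E i η) ∧
      Submodule.span K (Set.range fun i => E i η) = ⊤ := by
  obtain ⟨hX, hXt, hrank, hirr⟩ := h
  -- V is the supremum of the eigenspaces indexed by `Fin n`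
  have hsup : (⨆ i, X.eigenspace (x i)) = ⊤ := by
    rw [eq_top_iff, ← hX]
    refine iSup_le fun μ => ?_
    rcases eq_or_ne (X.eigenspace μ) ⊥ with hbot | hne
    · rw [hbot]; exact bot_le
    · obtain ⟨i, rfl⟩ := hxall μ hne
      exact le_iSup (fun i => X.eigenspace (x i)) i
  have hηmem : η ∈ ⨆ i, X.eigenspace (x i) := hsup ▸ Submodule.mem_top
  rw [Submodule.mem_iSup_iff_exists_finsupp] at hηmem
  obtain ⟨c, hc, hcsum⟩ := hηmem
  have hsum : ∑ i, c i = η := by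
    rw [← hcsum, Finsupp.sum_fintype]
    intro i; rfl
  have hEc : ∀ i, E i η = c i := by
    intro i
    rw [← hsum, map_sum, Finset.sum_eq_single i]
    · exact hE1 i (c i) (hc i)
    · intro j _ hji
      exact hE0 i j hji.symm (c j) (hc j)
    · intro hmem; exact absurd (Finset.mem_univ i) hmem
  have hmemE : ∀ i, E i η ∈ X.eigenspace (x i) := fun i => (hEc i) ▸ hc i
  -- the range of Δ is spanned by η
  have hfr : Module.finrank K (LinearMap.range (X - Xt)) = 1 := by
    rw [Module.finrank, hrank]; simp
  have hspanle : Submodule.span K {η} ≤ LinearMap.range (X - Xt) := by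
    rw [Submodule.span_le, Set.singleton_subset_iff]; exact hη
  have hrange : Submodule.span K {η} = LinearMap.range (X - Xt) := by
    apply Submodule.eq_of_le_of_finrank_le hspanle
    rw [hfr, finrank_span_singleton hη0]
  -- the span of the E i η is invariant and nonzero, hence ⊤
  set W := Submodule.span K (Set.range fun i => E i η) with hW
  have hmemW : ∀ i, E i η ∈ W := fun i =>
    Submodule.subset_span (Set.mem_range_self i)
  have hηW : η ∈ W := by
    rw [← hsum]
    refine Submodule.sum_mem _ fun i _ => ?_
    rw [← hEc i]; exact hmemW i
  have hXW : W.map (X : V →ₗ[K] V) ≤ W := by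
    rw [hW, Submodule.map_span_le]
    rintro _ ⟨i, rfl⟩
    have := Module.End.mem_eigenspace_iff.mp (hmemE i)
    rw [this]
    exact Submodule.smul_mem _ _ (hmemW i)
  have hXtW : W.map (Xt : V →ₗ[K] V) ≤ W := by
    rintro _ ⟨w, hw, rfl⟩
    have h1 : (Xt : V →ₗ[K] V) w = (X : V →ₗ[K] V) w - ((X - Xt : Module.End K V) : V →ₗ[K] V) w := by
      simp
    rw [h1]
    refine Submodule.sub_mem _ (hXW ⟨w, hw, rfl⟩) ?_
    have h2 : ((X - Xt : Module.End K V) : V →ₗ[K] V) w ∈ LinearMap.range (X - Xt) :=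
      LinearMap.mem_range_self _ w
    rw [← hrange] at h2
    exact Submodule.span_le.mpr (Set.singleton_subset_iff.mpr hηW) h2
  have hWtop : W = ⊤ := by
    rcases hirr W hXW hXtW with hbot | htop
    · exact absurd (hbot ▸ hηW) (by simpa using hη0)
    · exact htop
  -- nonvanishing of the components
  have hne : ∀ i, E i η ≠ 0 := by
    intro i hzero
    have hind : iSupIndep fun j => X.eigenspace (x j) :=
      (X.eigenspaces_iSupIndep).comp hxinj
    have hle : W ≤ ⨆ j, ⨆ _ : j ≠ i, X.eigenspace (x j) := by
      rw [hW, Submodule.span_le]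
      rintro _ ⟨j, rfl⟩
      rcases eq_or_ne j i with rfl | hji
      · simp only [hzero]
        exact Submodule.zero_mem _
      · exact Submodule.mem_iSup_of_mem j (Submodule.mem_iSup_of_mem hji (hmemE j))
    have htop : (⨆ j, ⨆ _ : j ≠ i, X.eigenspace (x j)) = ⊤ :=
      top_le_iff.mp (hWtop ▸ hle)
    have hdisj := hind i
    rw [htop, disjoint_top] at hdisj
    exact hxeig i hdisj
  refine ⟨hne, ?_, hWtop⟩
  exact X.eigenvectors_linearIndependent' x hxinj _ fun i => ⟨hmemE i, hne i⟩
end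

section
/- Let (X, X̃) be a Cauchy pair on V, Δ = X - X̃, and α_i = tr(E_i Δ) where E_i is the primitive idempotent of X for eigenvalue x_i. Then α_i ≠ 0 for all i. -/
private lemma trace_rank_one {K V : Type*} [Field K] [AddCommGroup V] [Module K V]
    [FiniteDimensional K V] (φ : V →ₗ[K] K) (w : V) :
    LinearMap.trace K V ((LinearMap.toSpanSingleton K V w) ∘ₗ φ) = φ w := by
  rw [LinearMap.trace_comp_comm']
  have hcomp : φ ∘ₗ LinearMap.toSpanSingleton K V w = φ w • LinearMap.id := by
    ext
    simp [LinearMap.toSpanSingleton, mul_comm]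
  rw [hcomp, map_smul, LinearMap.trace_id, Module.finrank_self]
  simp

theorem stmt12 {K V : Type*} [Field K] [AddCommGroup V] [Module K V] [FiniteDimensional K V]
    {n : ℕ} {X Xt : Module.End K V} (h : IsCauchyPair K V X Xt)
    (x : Fin n → K) (hxinj : Function.Injective x)
    (hxeig : ∀ i, X.HasEigenvalue (x i))
    (hxall : ∀ μ : K, X.HasEigenvalue μ → ∃ i, x i = μ)
    (E : Fin n → Module.End K V)
    (hE1 : ∀ i, ∀ u ∈ X.eigenspace (x i), E i u = u)
    (hE0 : ∀ i j, i ≠ j → ∀ u ∈ X.eigenspace (x j), E i u = 0)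
    (i : Fin n) :
    LinearMap.trace K V (E i * (X - Xt)) ≠ 0 := by
  obtain ⟨htopX, -, hrank, hirr⟩ := h
  -- extract a spanning vector of the range of Δ := X - Xt
  have hfin : Module.finrank K (LinearMap.range (X - Xt)) = 1 :=
    Module.rank_eq_one_iff_finrank_eq_one.mp hrank
  obtain ⟨w0, hw0, hall⟩ := (finrank_eq_one_iff' ).mp hfin
  set w : V := (w0 : V) with hwdef
  have hw : w ≠ 0 := fun hc => hw0 (Subtype.ext hc)
  have hmem : ∀ v : V, (X - Xt) v ∈ Submodule.span K {w} := by
    intro v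
    obtain ⟨c, hc⟩ := hall ⟨(X - Xt) v, LinearMap.mem_range_self _ v⟩
    rw [Submodule.mem_span_singleton]
    exact ⟨c, by simpa using congrArg (Subtype.val) hc⟩
  -- build the functional φ with Δ v = φ v • w
  set e := LinearEquiv.toSpanNonzeroSingleton K V w hw with hedef
  set φ : V →ₗ[K] K :=
    (e.symm : (Submodule.span K {w}) →ₗ[K] K) ∘ₗ
      (LinearMap.codRestrict (Submodule.span K {w}) ((X - Xt) : V →ₗ[K] V) hmem) with hφdef
  have hΔ : ∀ v : V, (X - Xt) v = φ v • w := by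
    intro v
    have : e (φ v) = ⟨(X - Xt) v, hmem v⟩ := by
      simp only [hφdef, LinearMap.coe_comp, Function.comp_apply, LinearEquiv.coe_coe]
      rw [LinearEquiv.apply_symm_apply]
      rfl
    have := congrArg (Subtype.val) this
    simpa [hedef] using this.symm
  have hφne : ∃ v, φ v ≠ 0 := by
    by_contra hc
    push_neg at hc
    have : ∀ v, (X - Xt) v = 0 := fun v => by rw [hΔ v, hc v, zero_smul]
    have hr0 : LinearMap.range (X - Xt) = ⊥ := by
      rw [LinearMap.range_eq_bot]; ext v; simp [this v]
    rw [hr0] at hrank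
    simp at hrank
  -- eigenspace facts
  have hnoeig : ∀ μ : K, (∀ j, x j ≠ μ) → X.eigenspace μ = ⊥ := by
    intro μ hμ
    by_contra hc
    obtain ⟨j, hj⟩ := hxall μ (Module.End.hasEigenvalue_iff.mpr hc)
    exact hμ j hj
  have hEmem : ∀ j v, E j v ∈ X.eigenspace (x j) := by
    intro j v
    have hv : v ∈ ⨆ μ : K, X.eigenspace μ := htopX ▸ Submodule.mem_top
    induction hv using Submodule.iSup_induction' with
    | mem μ u hu =>
      by_cases hμ : ∃ k, x k = μ
      · obtain ⟨k, rfl⟩ := hμ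
        by_cases hjk : j = k
        · subst hjk; rw [hE1 j u hu]; exact hu
        · rw [hE0 j k hjk u hu]; exact Submodule.zero_mem _
      · push_neg at hμ
        have := hnoeig μ hμ
        rw [this] at hu
        simp only [Submodule.mem_bot] at hu
        rw [hu, map_zero]
        exact Submodule.zero_mem _
    | zero => rw [map_zero]; exact Submodule.zero_mem _
    | add u v hu hv ihu ihv => rw [map_add]; exact Submodule.add_mem _ ihu ihv
  have hsum : ∀ v : V, ∑ j, E j v = v := by
    intro v
    have hv : v ∈ ⨆ μ : K, X.eigenspace μ := htopX ▸ Submodule.mem_top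
    induction hv using Submodule.iSup_induction' with
    | mem μ u hu =>
      by_cases hμ : ∃ k, x k = μ
      · obtain ⟨k, rfl⟩ := hμ
        rw [Fintype.sum_eq_single k (fun j hj => hE0 j k hj u hu)]
        exact hE1 k u hu
      · push_neg at hμ
        have := hnoeig μ hμ
        rw [this] at hu
        simp only [Submodule.mem_bot] at hu
        simp [hu]
    | zero => simp
    | add u v hu hv ihu ihv =>
      simp only [map_add, Finset.sum_add_distrib, ihu, ihv]
  -- the trace equals φ (E i w)
  have hEiΔ : (E i * (X - Xt) : Module.End K V) =
      (LinearMap.toSpanSingleton K V (E i w)) ∘ₗ φ := by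
    ext v
    have : (E i * (X - Xt)) v = E i ((X - Xt) v) := rfl
    rw [this, hΔ v, map_smul]
    rfl
  rw [hEiΔ, trace_rank_one]
  intro htr
  -- case A : E i w = 0 gives a contradiction irrespective of the trace
  by_cases hiw : E i w = 0
  · set W : Submodule K V := ⨆ j : {j : Fin n // j ≠ i}, X.eigenspace (x j) with hWdef
    have hXinv : ∀ (f : Module.End K V), (∀ μ v, v ∈ X.eigenspace μ → f v ∈ X.eigenspace μ) →
        W.map (f : V →ₗ[K] V) ≤ W := by
      intro f hf
      rw [hWdef, Submodule.map_iSup]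
      refine iSup_le fun j => le_trans ?_ (le_iSup _ j)
      rintro v ⟨u, hu, rfl⟩
      exact hf _ u hu
    have hXW : W.map (X : V →ₗ[K] V) ≤ W := by
      refine hXinv X fun μ v hv => ?_
      rw [Module.End.mem_eigenspace_iff] at hv ⊢
      rw [hv, map_smul, hv]
    have hwW : w ∈ W := by
      have := hsum w
      rw [← this]
      refine Submodule.sum_mem _ fun j _ => ?_
      by_cases hj : j = i
      · subst hj; rw [hiw]; exact Submodule.zero_mem _
      · exact Submodule.mem_iSup_of_mem ⟨j, hj⟩ (hEmem j w)
    have hXtW : W.map (Xt : V →ₗ[K] V) ≤ W := by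
      rintro v ⟨u, hu, rfl⟩
      have : Xt u = X u - (X - Xt) u := by simp
      rw [this, hΔ u]
      exact Submodule.sub_mem _ (hXW ⟨u, hu, rfl⟩) (Submodule.smul_mem _ _ hwW)
    rcases hirr W hXW hXtW with hbot | htop
    · rw [hbot] at hwW
      exact hw (by simpa using hwW)
    · -- W = ⊤ contradicts eigenspace (x i) being nonzero and independence
      obtain ⟨v, hv, hvne⟩ := (Submodule.ne_bot_iff _).mp
        (Module.End.hasEigenvalue_iff.mp (hxeig i))
      have hWle : W ≤ ⨆ (μ : K) (_ : μ ≠ x i), X.eigenspace μ := by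
        refine iSup_le fun j => ?_
        exact le_iSup₂_of_le (x (j : Fin n)) (fun hc => j.2 (hxinj hc)) le_rfl
      have hdisj := X.eigenspaces_iSupIndep (x i)
      have : v = 0 := by
        have hvW : v ∈ W := htop ▸ Submodule.mem_top
        exact (Submodule.mem_bot K).mp (hdisj.le_bot ⟨hv, hWle hvW⟩)
      exact hvne this
  -- case B : E i w ≠ 0 and φ (E i w) = 0
  · set U : Submodule K V := ⨅ k : ℕ, LinearMap.ker (φ ∘ₗ ((X ^ k : Module.End K V) : V →ₗ[K] V))
      with hUdef
    have hUmem : ∀ v : V, v ∈ U ↔ ∀ k : ℕ, φ ((X ^ k) v) = 0 := by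
      intro v
      simp [hUdef, Submodule.mem_iInf, LinearMap.mem_ker]
    have hpow : ∀ k : ℕ, (X ^ k) (E i w) = (x i) ^ k • E i w := by
      intro k
      induction k with
      | zero => simp
      | succ k ih =>
        rw [pow_succ', pow_succ']
        have : (X * X ^ k) (E i w) = X ((X ^ k) (E i w)) := rfl
        rw [this, ih, map_smul, Module.End.mem_eigenspace_iff.mp (hEmem i w), smul_smul, mul_comm]
    have hEiU : E i w ∈ U := by
      rw [hUmem]
      intro k
      rw [hpow k, map_smul, htr, smul_zero]
    have hXU : U.map (X : V →ₗ[K] V) ≤ U := by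
      rintro v ⟨u, hu, rfl⟩
      rw [hUmem]
      have hu' := (hUmem u).mp hu
      intro k
      have : (X ^ k) (X u) = (X ^ (k + 1)) u := by rw [pow_succ]; rfl
      rw [this]
      exact hu' (k + 1)
    have hXtU : U.map (Xt : V →ₗ[K] V) ≤ U := by
      rintro v ⟨u, hu, rfl⟩
      have hu0 : φ u = 0 := by
        have := (hUmem u).mp hu 0
        simpa using this
      have : Xt u = X u - (X - Xt) u := by simp
      rw [this, hΔ u, hu0, zero_smul, sub_zero]
      exact hXU ⟨u, hu, rfl⟩
    rcases hirr U hXU hXtU with hbot | htop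
    · rw [hbot] at hEiU
      exact hiw (by simpa using hEiU)
    · obtain ⟨v, hv⟩ := hφne
      have : v ∈ U := htop ▸ Submodule.mem_top
      have := (hUmem v).mp this 0
      simp at this
      exact hv this
end

section
/- Let (X, X̃) be a Cauchy pair on V with eigenvalues x_i of X and x̃_i of X̃, and let α_i = tr(E_i(X - X̃)) where E_i is the primitive idempotent of X for x_i. Then for every j, ∑_i α_i/(x_i - x̃_j) = 1. -/
open LinearMap Submodule

theorem Submodule.map_le_of_map_sub_le {R M : Type*} [Ring R] [AddCommGroup M] [Module R M]
    {A B : Module.End R M} {W : Submodule R M} (hA : W.map A ≤ W) (hAB : W.map (A - B) ≤ W) :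
    W.map B ≤ W := by
  rintro _ ⟨v, hv, rfl⟩
  have hB : B v = A v - (A - B) v := by simp
  rw [hB]
  exact W.sub_mem (hA ⟨v, hv, rfl⟩) (hAB ⟨v, hv, rfl⟩)

theorem sum_inv_sub_smul_mul_sub_smul_one {K A ι : Type*} [Field K] [Ring A] [Algebra K A]
    [Fintype ι] {E : ι → A} {X : A} {x : ι → K} {μ : K} (hsum : ∑ i, E i = 1)
    (hEX : ∀ i, E i * X = x i • E i) (hμ : ∀ i, x i ≠ μ) :
    (∑ i, (x i - μ)⁻¹ • E i) * (X - μ • 1) = 1 := by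
  rw [Finset.sum_mul]
  refine (Finset.sum_congr rfl fun i _ => ?_).trans hsum
  rw [smul_mul_assoc, mul_sub, hEX, mul_smul_comm, mul_one, ← sub_smul, smul_smul,
    inv_mul_cancel₀ (sub_ne_zero.mpr (hμ i)), one_smul]

section

variable {K V : Type*} [Field K] [AddCommGroup V] [Module K V]

theorem LinearMap.range_eq_span_singleton_of_rank_le_one {W : Type*} [AddCommGroup W]
    [Module K W] {D : V →ₗ[K] W} (hD : Module.rank K (range D) ≤ 1) {w : V} (hw : D w ≠ 0) :
    range D = K ∙ D w := by
  have : FiniteDimensional K (range D) :=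
    Module.rank_lt_aleph0_iff.mp (hD.trans_lt Cardinal.one_lt_aleph0)
  refine (eq_of_le_of_finrank_le (span_singleton_le_iff_mem _ _ |>.mpr (mem_range_self D w))
    ?_).symm
  rw [finrank_span_singleton hw]
  exact Module.finrank_le_of_rank_le hD

theorem LinearMap.trace_eq_one_of_range_le_span_singleton [FiniteDimensional K V]
    {P : Module.End K V} {w : V} (hP : range P ≤ K ∙ w) (hPw : P w = w) (hw : w ≠ 0) :
    trace K V P = 1 := by
  have hproj : IsProj (K ∙ w) P :=
    ⟨fun v => hP (mem_range_self P v), fun v hv => by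
      obtain ⟨c, rfl⟩ := mem_span_singleton.mp hv
      rw [map_smul, hPw]⟩
  rw [hproj.trace, finrank_span_singleton hw, Nat.cast_one]

section Spectral

variable {ι : Type*} {X : Module.End K V} {x : ι → K}

theorem Module.End.ext_of_eigenspace {W : Type*} [AddCommGroup W] [Module K W]
    (hX : ⨆ μ, X.eigenspace μ = ⊤) (hx : ∀ μ, X.HasEigenvalue μ → ∃ i, x i = μ)
    {S T : V →ₗ[K] W} (h : ∀ i, ∀ u ∈ X.eigenspace (x i), S u = T u) : S = T := by
  rw [← eqLocus_eq_top, eq_top_iff, ← hX]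
  refine iSup_le fun μ => ?_
  by_cases hμ : X.HasEigenvalue μ
  · obtain ⟨i, rfl⟩ := hx μ hμ
    exact fun u hu => h i u hu
  · rw [Module.End.hasEigenvalue_iff, not_not] at hμ
    simp [hμ]

variable {E : ι → Module.End K V}

theorem primitiveIdempotent_mul_eq_smul (hX : ⨆ μ, X.eigenspace μ = ⊤)
    (hx : ∀ μ, X.HasEigenvalue μ → ∃ i, x i = μ)
    (hE0 : ∀ i j, i ≠ j → ∀ u ∈ X.eigenspace (x j), E i u = 0) (i : ι) :
    E i * X = x i • E i := by
  refine Module.End.ext_of_eigenspace hX hx fun k u hu => ?_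
  rw [Module.End.mul_apply, Module.End.mem_eigenspace_iff.mp hu, map_smul, LinearMap.smul_apply]
  by_cases hik : i = k
  · rw [hik]
  · rw [hE0 i k hik u hu, smul_zero, smul_zero]

theorem sum_primitiveIdempotent_eq_one [Fintype ι] (hX : ⨆ μ, X.eigenspace μ = ⊤)
    (hx : ∀ μ, X.HasEigenvalue μ → ∃ i, x i = μ)
    (hE1 : ∀ i, ∀ u ∈ X.eigenspace (x i), E i u = u)
    (hE0 : ∀ i j, i ≠ j → ∀ u ∈ X.eigenspace (x j), E i u = 0) :
    ∑ i, E i = 1 := by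
  refine Module.End.ext_of_eigenspace hX hx fun k u hu => ?_
  rw [LinearMap.sum_apply, Finset.sum_eq_single k (fun i _ hik => hE0 i k hik u hu) (by simp),
    hE1 k u hu, Module.End.one_apply]

end Spectral

namespace IsCauchyPair

variable {X Xt : Module.End K V}

theorem sub_ne_zero (h : IsCauchyPair K V X Xt) : X - Xt ≠ 0 := by
  intro h0
  have hrank := h.2.2.1
  rw [h0, range_zero, rank_bot] at hrank
  exact zero_ne_one hrank

theorem not_range_sub_le (h : IsCauchyPair K V X Xt) {U : Submodule K V} (hXU : U.map X ≤ U)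
    (hU : U ≠ ⊤) : ¬ range (X - Xt) ≤ U := by
  intro hle
  have hXtU : U.map Xt ≤ U := map_le_of_map_sub_le hXU (map_le_range.trans hle)
  rcases h.2.2.2 U hXU hXtU with rfl | rfl
  · exact h.sub_ne_zero (range_eq_bot.mp (le_bot_iff.mp hle))
  · exact hU rfl

theorem mul_sub_ne_zero (h : IsCauchyPair K V X Xt) {P : Module.End K V} {c : K}
    (hPX : P * X = c • P) (hP : P ≠ 0) : P * (X - Xt) ≠ 0 := by
  have hXker : (ker P).map X ≤ ker P := by
    rintro _ ⟨v, hv, rfl⟩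
    rw [mem_ker, ← Module.End.mul_apply, hPX, LinearMap.smul_apply, mem_ker.mp hv, smul_zero]
  intro h0
  exact h.not_range_sub_le hXker (ker_eq_top.not.mpr hP) (range_le_ker_iff.mpr h0)

theorem sub_apply_ne_zero (h : IsCauchyPair K V X Xt) {μ : K} {w : V}
    (hw : Xt.HasEigenvector μ w) : (X - Xt) w ≠ 0 := by
  intro h0
  have hker : (K ∙ w) ≤ ker (X - Xt) := span_singleton_le_iff_mem _ _ |>.mpr h0
  have hXtw : (K ∙ w).map Xt ≤ K ∙ w := by
    rintro _ ⟨v, hv, rfl⟩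
    obtain ⟨c, rfl⟩ := mem_span_singleton.mp hv
    rw [map_smul, hw.apply_eq_smul, smul_smul]
    exact smul_mem _ _ (mem_span_singleton_self w)
  have hXw : (K ∙ w).map X ≤ K ∙ w := by
    refine map_le_of_map_sub_le hXtw ?_
    rintro _ ⟨v, hv, rfl⟩
    rw [← neg_sub, LinearMap.neg_apply, mem_ker.mp (hker hv), neg_zero]
    exact zero_mem _
  rcases h.2.2.2 _ hXw hXtw with hbot | htop
  · exact hw.2 (span_singleton_eq_bot.mp hbot)
  · exact h.sub_ne_zero (ker_eq_top.mp (top_le_iff.mp (htop ▸ hker)))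

end IsCauchyPair

end

theorem stmt13_general {K V : Type*} [Field K] [AddCommGroup V] [Module K V] [FiniteDimensional K V]
    {n : ℕ} {X Xt : Module.End K V} (h : IsCauchyPair K V X Xt)
    (x : Fin n → K)
    (hxeig : ∀ i, X.HasEigenvalue (x i))
    (hxall : ∀ μ : K, X.HasEigenvalue μ → ∃ i, x i = μ)
    (xt : Fin n → K)
    (hxteig : ∀ i, Xt.HasEigenvalue (xt i))
    (E : Fin n → Module.End K V)
    (hE1 : ∀ i, ∀ u ∈ X.eigenspace (x i), E i u = u)
    (hE0 : ∀ i j, i ≠ j → ∀ u ∈ X.eigenspace (x j), E i u = 0) :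
    ∀ j, ∑ i, (LinearMap.trace K V (E i * (X - Xt))) / (x i - xt j) = 1 := by
  intro j
  obtain ⟨w, hw⟩ := (hxteig j).exists_hasEigenvector
  have hDw : (X - Xt) w = (X - xt j • 1) w := by simp [hw.apply_eq_smul]
  have hrange : range (X - Xt) = K ∙ (X - Xt) w :=
    range_eq_span_singleton_of_rank_le_one h.2.2.1.le (h.sub_apply_ne_zero hw)
  have hEX := primitiveIdempotent_mul_eq_smul h.1 hxall hE0
  have hE : ∀ i, E i ≠ 0 := fun i hEi => by
    obtain ⟨u, hu⟩ := (hxeig i).exists_hasEigenvector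
    exact hu.2 (by rw [← hE1 i u hu.1, hEi, LinearMap.zero_apply])
  have hEDw : ∀ i, E i ((X - Xt) w) = (x i - xt j) • E i w := fun i => by
    rw [hDw, ← Module.End.mul_apply, mul_sub, hEX, mul_smul_comm, mul_one, ← sub_smul,
      LinearMap.smul_apply]
  have hx : ∀ i, x i ≠ xt j := fun i hi => by
    refine h.mul_sub_ne_zero (hEX i) (hE i) (range_le_ker_iff.mp ?_)
    rw [hrange, span_singleton_le_iff_mem, mem_ker, hEDw, hi, sub_self, zero_smul]
  have hR := sum_inv_sub_smul_mul_sub_smul_one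
    (sum_primitiveIdempotent_eq_one h.1 hxall hE1 hE0) hEX hx
  set R := ∑ i, (x i - xt j)⁻¹ • E i
  have hRDw : (R * (X - Xt)) w = w := by
    rw [Module.End.mul_apply, hDw, ← Module.End.mul_apply, hR, Module.End.one_apply]
  have hRD : range (R * (X - Xt)) ≤ K ∙ w := by
    rw [Module.End.mul_eq_comp, range_comp, hrange, Submodule.map_span, Set.image_singleton,
      ← Module.End.mul_apply, hRDw]
  calc ∑ i, trace K V (E i * (X - Xt)) / (x i - xt j) = trace K V (R * (X - Xt)) := by
        simp [R, Finset.sum_mul, map_sum, div_eq_inv_mul]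
    _ = 1 := trace_eq_one_of_range_le_span_singleton hRD hRDw hw.2

theorem stmt13 {K V : Type*} [Field K] [AddCommGroup V] [Module K V] [FiniteDimensional K V]
    {n : ℕ} {X Xt : Module.End K V} (h : IsCauchyPair K V X Xt)
    (x : Fin n → K) (hxinj : Function.Injective x)
    (hxeig : ∀ i, X.HasEigenvalue (x i))
    (hxall : ∀ μ : K, X.HasEigenvalue μ → ∃ i, x i = μ)
    (xt : Fin n → K) (hxtinj : Function.Injective xt)
    (hxteig : ∀ i, Xt.HasEigenvalue (xt i))
    (hxtall : ∀ μ : K, Xt.HasEigenvalue μ → ∃ i, xt i = μ)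
    (E : Fin n → Module.End K V)
    (hE1 : ∀ i, ∀ u ∈ X.eigenspace (x i), E i u = u)
    (hE0 : ∀ i j, i ≠ j → ∀ u ∈ X.eigenspace (x j), E i u = 0) :
    ∀ j, ∑ i, (LinearMap.trace K V (E i * (X - Xt))) / (x i - xt j) = 1 :=
  stmt13_general h x hxeig hxall xt hxteig E hE1 hE0
end

section
/- Let (X, X̃) be a Cauchy pair on V with eigenvalues {x_i} of X and {x̃_i} of X̃, and let α_i = tr(E_i(X - X̃)) where E_i is the primitive idempotent of X for x_i. Then α_i = (∏_k (x_i - x̃_k)) / (∏_{k ≠ i} (x_i - x_k)) for all i. -/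
/-!
Write `X - X̃ = φ(·) v` with `v ≠ 0`, and split `v = ∑ b_j` along the eigenspaces of `X`.
The span of the `b_j` is `X`-invariant and contains `v`, hence also `X̃`-invariant, so it is all
of `V`; as `X` has `n` distinct eigenvalues, the `b_j` form an eigenbasis of `X`, and
`tr (E_i (X - X̃)) = φ(b_i)`.
In this basis `x_i - X̃` has matrix `diag (x_i - x_k) + 𝟙 φ(b)ᵀ`, whose determinant is
`φ(b_i) ∏_{k ≠ i} (x_i - x_k)` because its `i`-th diagonal entry vanishes; in an eigenbasis of
`X̃` the same determinant is `∏_k (x_i - x̃_k)`.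
-/

open Module Finset

lemma LinearMap.exists_eq_smulRight_of_rank_range_eq_one {K V W : Type*} [Field K]
    [AddCommGroup V] [Module K V] [AddCommGroup W] [Module K W] (f : V →ₗ[K] W)
    (h : Module.rank K (LinearMap.range f) = 1) :
    ∃ (φ : V →ₗ[K] K) (w : W), w ≠ 0 ∧ f = φ.smulRight w := by
  obtain ⟨e⟩ : Nonempty (LinearMap.range f ≃ₗ[K] K) :=
    nonempty_linearEquiv_of_lift_rank_eq <| by
      rw [h, rank_self, Cardinal.lift_one, Cardinal.lift_one]
  refine ⟨e.toLinearMap ∘ₗ f.rangeRestrict, e.symm 1, by simp, ?_⟩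
  ext u
  rw [smulRight_apply, comp_apply, LinearEquiv.coe_coe, ← Submodule.coe_smul, ← map_smul,
    smul_eq_mul, mul_one, LinearEquiv.symm_apply_apply, LinearMap.codRestrict_apply]

lemma Matrix.det_diagonal_add_vecMulVec_one_of_eq_zero {ι R : Type*} [Fintype ι] [DecidableEq ι]
    [CommRing R] (d a : ι → R) {i : ι} (hd : d i = 0) :
    (diagonal d + vecMulVec 1 a).det = a i * ∏ k ∈ univ \ {i}, d k := by
  -- subtracting row `i` from the other rows leaves `diagonal d` with row `i` replaced by `a`
  have hrow : (diagonal d + vecMulVec 1 a).det = ((diagonal d).updateRow i a).det := by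
    refine det_eq_of_forall_row_eq_smul_add_const (fun j => if j = i then 0 else 1) i
      (if_pos rfl) fun j k => ?_
    by_cases hj : j = i
    · subst hj
      rcases eq_or_ne j k with rfl | hk <;> simp [*]
    · rcases eq_or_ne i k with rfl | hk <;> simp [diagonal_apply, *]
  have hsplit : a = a i • Pi.single i 1 + (a - a i • Pi.single i 1) := by abel
  have hzero : ((diagonal d).updateRow i (a - a i • Pi.single i 1)).det = 0 :=
    det_eq_zero_of_column_eq_zero i fun j => by
      by_cases hj : j = i
      · subst hj; simp
      · simp [hj]
  have hsingle : (diagonal d).updateRow i (Pi.single i 1) = diagonal (Function.update d i 1) := by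
    ext j k
    by_cases hj : j = i
    · subst hj; rcases eq_or_ne j k with rfl | hk <;> simp [*, eq_comm]
    · simp [diagonal_apply, hj, Function.update_of_ne]
  rw [hrow]
  conv_lhs => rw [hsplit]
  rw [det_updateRow_add, hzero, add_zero, det_updateRow_smul, hsingle, det_diagonal,
    prod_update_of_mem (mem_univ i), one_mul]

section

variable {K V : Type*} [Field K] [AddCommGroup V] [Module K V]

lemma Submodule.exists_sum_eq_of_mem_iSup {ι : Type*} [Fintype ι] {p : ι → Submodule K V}
    {v : V} (hv : v ∈ ⨆ i, p i) : ∃ b : ι → V, (∀ i, b i ∈ p i) ∧ ∑ i, b i = v := by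
  obtain ⟨c, hc, rfl⟩ := (Submodule.mem_iSup_iff_exists_finsupp p v).mp hv
  exact ⟨c, hc, (Finsupp.sum_fintype c (fun _ u => u) fun _ => rfl).symm⟩

namespace Module.End

lemma apply_sum_eq_component {ι : Type*} [Fintype ι] [DecidableEq ι] {p : ι → Submodule K V}
    {E : End K V} {i : ι} (hE1 : ∀ u ∈ p i, E u = u)
    (hE0 : ∀ j, i ≠ j → ∀ u ∈ p j, E u = 0) {b : ι → V} (hb : ∀ j, b j ∈ p j) :
    E (∑ j, b j) = b i := by
  rw [map_sum, sum_eq_single i (fun j _ hj => hE0 j (Ne.symm hj) _ (hb j)) (by simp)]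
  exact hE1 _ (hb i)

lemma iSup_eigenspace_comp_eq_top {ι : Type*} {T : End K V} (hT : ⨆ μ, T.eigenspace μ = ⊤)
    {x : ι → K} (hx : ∀ μ, T.HasEigenvalue μ → ∃ i, x i = μ) :
    ⨆ i, T.eigenspace (x i) = ⊤ := by
  refine top_le_iff.mp (hT ▸ iSup_le fun μ => ?_)
  by_cases hμ : T.HasEigenvalue μ
  · obtain ⟨i, rfl⟩ := hx μ hμ
    exact le_iSup (fun i => T.eigenspace (x i)) i
  · simp [hasEigenvalue_iff.not_left.mp hμ]

lemma card_le_finrank_of_hasEigenvalue [FiniteDimensional K V] {ι : Type*} [Fintype ι]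
    {T : End K V} {μ : ι → K} (hμ : Function.Injective μ)
    (h : ∀ k, T.HasEigenvalue (μ k)) : Fintype.card ι ≤ finrank K V := by
  choose w hw using fun k => (h k).exists_hasEigenvector
  exact (T.eigenvectors_linearIndependent' μ hμ w hw).fintype_card_le_finrank

lemma exists_basis_of_hasEigenvalue [FiniteDimensional K V] {ι : Type*} [Fintype ι]
    {T : End K V} {μ : ι → K} (hμ : Function.Injective μ) (h : ∀ k, T.HasEigenvalue (μ k))
    (hcard : Fintype.card ι = finrank K V) :
    ∃ B : Basis ι K V, ∀ k, T (B k) = μ k • B k := by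
  choose w hw using fun k => (h k).exists_hasEigenvector
  have hli := T.eigenvectors_linearIndependent' μ hμ w hw
  exact ⟨basisOfLinearIndependentOfCardEqFinrank' w hli hcard,
    fun k => by simpa using (hw k).apply_eq_smul⟩

end Module.End

namespace LinearMap

variable {ι : Type*} [Fintype ι] [DecidableEq ι] (B : Basis ι K V)

lemma toMatrix_eq_diagonal {T : Module.End K V} {μ : ι → K}
    (h : ∀ k, T (B k) = μ k • B k) : toMatrix B B T = Matrix.diagonal μ := by
  ext j k
  rw [toMatrix_apply, h, map_smul, B.repr_self]
  rcases eq_or_ne j k with rfl | hjk <;> simp [*]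

lemma det_eq_prod_of_apply_basis {T : Module.End K V} {μ : ι → K}
    (h : ∀ k, T (B k) = μ k • B k) : LinearMap.det T = ∏ k, μ k := by
  rw [← det_toMatrix B, toMatrix_eq_diagonal B h, Matrix.det_diagonal]

lemma det_smul_one_sub_of_sub_eq_smulRight {X Xt : Module.End K V} {x : ι → K}
    (hX : ∀ k, X (B k) = x k • B k) {φ : V →ₗ[K] K}
    (hR : X - Xt = φ.smulRight (∑ k, B k)) (i : ι) :
    LinearMap.det (x i • 1 - Xt) = φ (B i) * ∏ k ∈ univ \ {i}, (x i - x k) := by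
  have hsplit : x i • 1 - Xt = (x i • 1 - X) + φ.smulRight (∑ k, B k) := by rw [← hR]; abel
  have hdiag : ∀ k, (x i • 1 - X) (B k) = (x i - x k) • B k := fun k => by
    simp [hX, sub_smul]
  have hones : ⇑(B.repr (∑ k, B k)) = 1 := by
    simpa only [Pi.one_apply, one_smul] using B.repr_sum_self 1
  rw [← det_toMatrix B, hsplit, map_add, toMatrix_eq_diagonal B hdiag, toMatrix_smulRight, hones]
  exact Matrix.det_diagonal_add_vecMulVec_one_of_eq_zero _ (φ ∘ B) (sub_self (x i))

end LinearMap

namespace IsCauchyPair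

variable {X Xt : Module.End K V} {φ : V →ₗ[K] K}

lemma eq_top_of_map_le_of_mem (h : IsCauchyPair K V X Xt) {v : V}
    (hR : X - Xt = φ.smulRight v) (hv : v ≠ 0) {W : Submodule K V}
    (hXW : W.map X ≤ W) (hvW : v ∈ W) : W = ⊤ := by
  have hXtW : W.map Xt ≤ W := by
    rintro _ ⟨u, hu, rfl⟩
    have hXtu : Xt u = X u - φ u • v := by
      rw [← LinearMap.smulRight_apply, ← hR, LinearMap.sub_apply, sub_sub_cancel]
    rw [hXtu]
    exact W.sub_mem (hXW ⟨u, hu, rfl⟩) (W.smul_mem _ hvW)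
  exact (h.2.2.2 W hXW hXtW).resolve_left fun hW => hv (by simpa [hW] using hvW)

lemma span_range_eq_top (h : IsCauchyPair K V X Xt) {ι : Type*} [Fintype ι] {b : ι → V}
    (hR : X - Xt = φ.smulRight (∑ k, b k)) (hv : ∑ k, b k ≠ 0) {x : ι → K}
    (hb : ∀ k, X (b k) = x k • b k) : Submodule.span K (Set.range b) = ⊤ := by
  refine h.eq_top_of_map_le_of_mem hR hv ?_
    (Submodule.sum_mem _ fun k _ => Submodule.subset_span ⟨k, rfl⟩)
  rw [Submodule.map_span_le]
  rintro _ ⟨k, rfl⟩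
  rw [hb]
  exact Submodule.smul_mem _ _ (Submodule.subset_span ⟨k, rfl⟩)

end IsCauchyPair

end

theorem stmt14_general {K V : Type*} [Field K] [AddCommGroup V] [Module K V] [FiniteDimensional K V]
    {n : ℕ} {X Xt : Module.End K V} (h : IsCauchyPair K V X Xt)
    (x : Fin n → K) (hxinj : Function.Injective x)
    (hxeig : ∀ i, X.HasEigenvalue (x i))
    (hxall : ∀ μ : K, X.HasEigenvalue μ → ∃ i, x i = μ)
    (xt : Fin n → K) (hxtinj : Function.Injective xt)
    (hxteig : ∀ i, Xt.HasEigenvalue (xt i))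
    (E : Fin n → Module.End K V)
    (hE1 : ∀ i, ∀ u ∈ X.eigenspace (x i), E i u = u)
    (hE0 : ∀ i j, i ≠ j → ∀ u ∈ X.eigenspace (x j), E i u = 0)
    (i : Fin n) :
    LinearMap.trace K V (E i * (X - Xt)) =
      (∏ k, (x i - xt k)) / (∏ k ∈ Finset.univ \ {i}, (x i - x k)) := by
  obtain ⟨φ, v, hv, hR⟩ := (X - Xt).exists_eq_smulRight_of_rank_range_eq_one h.2.2.1
  obtain ⟨b, hb, rfl⟩ := Submodule.exists_sum_eq_of_mem_iSup
    ((Module.End.iSup_eigenspace_comp_eq_top h.1 hxall).symm ▸ Submodule.mem_top (x := v))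
  have hXb : ∀ k, X (b k) = x k • b k := fun k => Module.End.mem_eigenspace_iff.mp (hb k)
  have hspan := h.span_range_eq_top hR hv hXb
  have hcard : Fintype.card (Fin n) = finrank K V := by
    refine le_antisymm (Module.End.card_le_finrank_of_hasEigenvalue hxinj hxeig) ?_
    have := finrank_range_le_card (R := K) b
    rwa [Set.finrank, hspan, finrank_top] at this
  have hB := coe_basisOfTopLeSpanOfCardEqFinrank b hspan.ge hcard
  obtain ⟨Bt, hBt⟩ := Module.End.exists_basis_of_hasEigenvalue hxtinj hxteig hcard
  have hdet : ∏ k, (x i - xt k) = φ (b i) * ∏ k ∈ univ \ {i}, (x i - x k) := by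
    rw [← LinearMap.det_eq_prod_of_apply_basis Bt (T := x i • 1 - Xt)
      fun k => by simp [hBt, sub_smul],
      LinearMap.det_smul_one_sub_of_sub_eq_smulRight _ (hB ▸ hXb) (hB ▸ hR), hB]
  have htrace : LinearMap.trace K V (E i * (X - Xt)) = φ (b i) := by
    have hcomp : E i * φ.smulRight (∑ k, b k) = φ.smulRight (E i (∑ k, b k)) := by ext; simp
    rw [hR, hcomp, LinearMap.trace_smulRight,
      Module.End.apply_sum_eq_component (p := fun j => X.eigenspace (x j)) (hE1 i) (hE0 i) hb]
  have hne : ∏ k ∈ univ \ {i}, (x i - x k) ≠ 0 :=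
    prod_ne_zero_iff.mpr fun k hk => sub_ne_zero.mpr (hxinj.ne (by simpa [eq_comm] using hk))
  rw [htrace, hdet, mul_div_cancel_right₀ _ hne]

theorem stmt14 {K V : Type*} [Field K] [AddCommGroup V] [Module K V] [FiniteDimensional K V]
    {n : ℕ} {X Xt : Module.End K V} (h : IsCauchyPair K V X Xt)
    (x : Fin n → K) (hxinj : Function.Injective x)
    (hxeig : ∀ i, X.HasEigenvalue (x i))
    (hxall : ∀ μ : K, X.HasEigenvalue μ → ∃ i, x i = μ)
    (xt : Fin n → K) (hxtinj : Function.Injective xt)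
    (hxteig : ∀ i, Xt.HasEigenvalue (xt i))
    (hxtall : ∀ μ : K, Xt.HasEigenvalue μ → ∃ i, xt i = μ)
    (E : Fin n → Module.End K V)
    (hE1 : ∀ i, ∀ u ∈ X.eigenspace (x i), E i u = u)
    (hE0 : ∀ i j, i ≠ j → ∀ u ∈ X.eigenspace (x j), E i u = 0)
    (i : Fin n) :
    LinearMap.trace K V (E i * (X - Xt)) =
      (∏ k, (x i - xt k)) / (∏ k ∈ Finset.univ \ {i}, (x i - x k)) :=
  stmt14_general h x hxinj hxeig hxall xt hxtinj hxteig E hE1 hE0 i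
end

section
/- Let (X, X̃) be a Cauchy pair on V and let ⟨·,·⟩ be a nonzero bilinear form on V satisfying ⟨Xu, v⟩ = ⟨u, Xv⟩ and ⟨X̃u, v⟩ = ⟨u, X̃v⟩ for all u, v ∈ V. Then ⟨·,·⟩ is symmetric and nondegenerate. -/
theorem stmt17 {K V : Type*} [Field K] [AddCommGroup V] [Module K V] [FiniteDimensional K V]
    {X Xt : Module.End K V} (h : IsCauchyPair K V X Xt)
    (B : V →ₗ[K] V →ₗ[K] K) (hB : B ≠ 0)
    (hBX : ∀ u v : V, B (X u) v = B u (X v))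
    (hBXt : ∀ u v : V, B (Xt u) v = B u (Xt v)) :
    (∀ u v : V, B u v = B v u) ∧ ∀ u : V, (∀ v : V, B u v = 0) → u = 0 := by
  obtain ⟨-, -, hrank, hirr⟩ := h
  set D : Module.End K V := X - Xt with hD
  -- get a spanning vector of range D
  obtain ⟨w₀, hw₀ne, hw₀⟩ := rank_eq_one_iff.mp hrank
  set w : V := (w₀ : V) with hw
  have hwne : w ≠ 0 := fun hz => hw₀ne (Subtype.ext hz)
  have hmul : ∀ z : V, ∃ r : K, D z = r • w := by
    intro z
    obtain ⟨r, hr⟩ := hw₀ ⟨D z, LinearMap.mem_range_self D z⟩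
    exact ⟨r, by simpa using congrArg Subtype.val hr.symm⟩
  -- the map p ↦ p(X) w
  let f : Polynomial K →ₗ[K] V :=
    { toFun := fun p => Polynomial.aeval X p w
      map_add' := fun p q => by simp [LinearMap.add_apply]
      map_smul' := fun c p => by simp [LinearMap.smul_apply] }
  have hf : ∀ p : Polynomial K, f p = Polynomial.aeval X p w := fun _ => rfl
  set Z : Submodule K V := LinearMap.range f with hZ
  have hwZ : w ∈ Z := ⟨1, by simp [hf]⟩
  have hXf : ∀ p : Polynomial K, X (f p) = f (Polynomial.X * p) := by
    intro p
    simp [hf, Polynomial.aeval_mul, Module.End.mul_apply]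
  have hZX : Z.map (X : V →ₗ[K] V) ≤ Z := by
    rintro _ ⟨_, ⟨p, rfl⟩, rfl⟩
    exact ⟨Polynomial.X * p, (hXf p).symm⟩
  have hZXt : Z.map (Xt : V →ₗ[K] V) ≤ Z := by
    rintro _ ⟨_, ⟨p, rfl⟩, rfl⟩
    have : Xt (f p) = X (f p) - D (f p) := by simp [hD]
    rw [this]
    obtain ⟨r, hr⟩ := hmul (f p)
    rw [hr]
    exact sub_mem (hZX ⟨f p, ⟨p, rfl⟩, rfl⟩) (Submodule.smul_mem _ _ hwZ)
  have hZtop : Z = ⊤ := by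
    rcases hirr Z hZX hZXt with hbot | htop
    · exact absurd (hbot ▸ hwZ) (by simpa using hwne)
    · exact htop
  -- self-adjointness of p(X)
  have hXpow : ∀ (n : ℕ) (a b : V), B ((X ^ n) a) b = B a ((X ^ n) b) := by
    intro n
    induction n with
    | zero => intro a b; simp
    | succ k ih =>
      intro a b
      rw [pow_succ]
      simp only [Module.End.mul_apply]
      rw [ih, hBX]
      have hc : X ((X ^ k) b) = (X ^ k) (X b) := by
        rw [← Module.End.mul_apply, ← Module.End.mul_apply, ← pow_succ', ← pow_succ]
      rw [hc]
  have hBp : ∀ (p : Polynomial K) (a b : V),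
      B (Polynomial.aeval X p a) b = B a (Polynomial.aeval X p b) := by
    intro p
    induction p using Polynomial.induction_on' with
    | add p q hp hq =>
      intro a b
      simp [map_add, LinearMap.add_apply, hp, hq]
    | monomial n c =>
      intro a b
      simp only [Polynomial.aeval_monomial, Module.End.mul_apply,
        Module.algebraMap_end_apply, LinearMap.smul_apply, map_smul, LinearMap.map_smul₂]
      rw [hXpow]
  -- symmetry
  have hsymm : ∀ u v : V, B u v = B v u := by
    intro u v
    obtain ⟨p, hp⟩ : ∃ p, f p = u := by
      have : u ∈ Z := hZtop ▸ Submodule.mem_top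
      exact this
    obtain ⟨q, hq⟩ : ∃ q, f q = v := by
      have : v ∈ Z := hZtop ▸ Submodule.mem_top
      exact this
    rw [← hp, ← hq, hf, hf, hBp, hBp,
      show (Polynomial.aeval X p) ((Polynomial.aeval X q) w)
          = (Polynomial.aeval X (p * q)) w by
        simp [Polynomial.aeval_mul, Module.End.mul_apply],
      show (Polynomial.aeval X q) ((Polynomial.aeval X p) w)
          = (Polynomial.aeval X (q * p)) w by
        simp [Polynomial.aeval_mul, Module.End.mul_apply],
      mul_comm p q]
  refine ⟨hsymm, ?_⟩
  -- nondegeneracy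
  have hker : (LinearMap.ker B).map (X : V →ₗ[K] V) ≤ LinearMap.ker B := by
    rintro _ ⟨u, hu, rfl⟩
    simp only [SetLike.mem_coe, LinearMap.mem_ker] at hu ⊢
    ext v
    rw [LinearMap.zero_apply, hBX, hu]
    simp
  have hkert : (LinearMap.ker B).map (Xt : V →ₗ[K] V) ≤ LinearMap.ker B := by
    rintro _ ⟨u, hu, rfl⟩
    simp only [SetLike.mem_coe, LinearMap.mem_ker] at hu ⊢
    ext v
    rw [LinearMap.zero_apply, hBXt, hu]
    simp
  rcases hirr (LinearMap.ker B) hker hkert with hbot | htop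
  · intro u hu
    have : B u = 0 := by ext v; simpa using hu v
    have : u ∈ LinearMap.ker B := this
    rw [hbot] at this
    simpa using this
  · exact absurd (LinearMap.ker_eq_top.mp htop) hB
end
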